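/- Let J : ℝ^d → ℝ be differentiable with L_g-Lipschitz gradient (L_g > 0), bounded above with J* = sup J, and satisfying the relaxed weak gradient domination: there exist μ > 0 and ε' ≥ 0 such that ε' + ‖∇J(θ)‖ ≥ √(2μ) (J* − J(θ)) for all θ ∈ ℝ^d. Let α > 0, let θ, d ∈ ℝ^d, and set θ' = θ + α d/‖d‖ (convention 0/‖0‖ = 0). Then J* − J(θ') ≤ (1 − α√(2μ)) (J* − J(θ)) + α ε' + 2 α ‖d − ∇J(θ)‖ + L_g α²/2. -/

import Mathlib

/-!
By the descent lemma for an `L`-smooth `J`, a step `v` with `‖v‖ ≤ α` gains at least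
`⟪∇J θ, v⟫ - L α² / 2`. For the normalized direction `u = d / ‖d‖` one has
`⟪∇J θ, u⟫ = ‖d‖ - ⟪d - ∇J θ, u⟫ ≥ ‖∇J θ‖ - 2 ‖d - ∇J θ‖`, and gradient domination turns
`α ‖∇J θ‖` into `α √(2μ) (J* - J θ) - α ε'`.
-/

open scoped RealInnerProductSpace

section NormalizedDirection

variable {E : Type*} [NormedAddCommGroup E] [InnerProductSpace ℝ E]

lemma norm_inv_norm_smul_le_one (d : E) : ‖‖d‖⁻¹ • d‖ ≤ 1 := by
  rw [norm_smul, norm_inv, norm_norm]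
  exact inv_mul_le_one_of_le₀ le_rfl (norm_nonneg d)

lemma real_inner_inv_norm_smul_self (d : E) : ⟪d, ‖d‖⁻¹ • d⟫ = ‖d‖ := by
  rw [real_inner_smul_right, real_inner_self_eq_norm_sq]
  rcases eq_or_ne ‖d‖ 0 with h | h
  · simp [h]
  · field_simp

lemma norm_sub_two_mul_norm_sub_le_inner_inv_norm_smul (g d : E) :
    ‖g‖ - 2 * ‖d - g‖ ≤ ⟪g, ‖d‖⁻¹ • d⟫ := by
  have herr : ⟪d - g, ‖d‖⁻¹ • d⟫ ≤ ‖d - g‖ :=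
    (real_inner_le_norm _ _).trans
      (mul_le_of_le_one_right (norm_nonneg _) (norm_inv_norm_smul_le_one d))
  have hsplit : ⟪g, ‖d‖⁻¹ • d⟫ = ‖d‖ - ⟪d - g, ‖d‖⁻¹ • d⟫ := by
    rw [inner_sub_left, real_inner_inv_norm_smul_self]; ring
  have htri : ‖g‖ ≤ ‖d‖ + ‖d - g‖ := norm_le_insert d g
  linarith

end NormalizedDirection

section Descent

variable {E : Type*} [NormedAddCommGroup E] [InnerProductSpace ℝ E] [CompleteSpace E]

lemma DifferentiableAt.hasDerivAt_comp_add_smul {f : E → ℝ} {x v : E} {t : ℝ}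
    (hf : DifferentiableAt ℝ f (x + t • v)) :
    HasDerivAt (fun s : ℝ => f (x + s • v)) ⟪gradient f (x + t • v), v⟫ t := by
  have hline : HasDerivAt (fun s : ℝ => x + s • v) v t := by
    simpa using ((hasDerivAt_id t).smul_const v).const_add x
  rw [inner_gradient_left]
  exact hf.hasFDerivAt.comp_hasDerivAt t hline

theorem add_inner_gradient_sub_le_of_gradient_lipschitz {f : E → ℝ} {L : ℝ}
    (hf : Differentiable ℝ f) (hlip : ∀ x y, ‖gradient f x - gradient f y‖ ≤ L * ‖x - y‖)
    (x v : E) :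
    f x + ⟪gradient f x, v⟫ - L / 2 * ‖v‖ ^ 2 ≤ f (x + v) := by
  set g := gradient f x
  -- The Lipschitz bound makes `ψ' ≥ 0` on `t ≥ 0`; the claim is `ψ 0 ≤ ψ 1`.
  let ψ : ℝ → ℝ := fun t => f (x + t • v) - t * ⟪g, v⟫ + L / 2 * t ^ 2 * ‖v‖ ^ 2
  let ψ' : ℝ → ℝ := fun t => ⟪gradient f (x + t • v) - g, v⟫ + L * t * ‖v‖ ^ 2
  have hψ : ∀ t, HasDerivAt ψ (ψ' t) t := by
    intro t
    have hquad : HasDerivAt (fun s : ℝ => L / 2 * s ^ 2 * ‖v‖ ^ 2) (L * t * ‖v‖ ^ 2) t := by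
      exact (((hasDerivAt_pow 2 t).const_mul (L / 2)).mul_const (‖v‖ ^ 2)).congr_deriv
        (by push_cast; ring)
    exact ((((hf _).hasDerivAt_comp_add_smul).sub (hasDerivAt_mul_const ⟪g, v⟫)).add hquad).congr_deriv
      (by simp only [ψ', inner_sub_left])
  have hψ'_nonneg : ∀ t, 0 ≤ t → 0 ≤ ψ' t := by
    intro t ht
    have hgrad : ‖gradient f (x + t • v) - g‖ ≤ L * (t * ‖v‖) := by
      simpa [norm_smul, abs_of_nonneg ht] using hlip (x + t • v) x
    have hcs := neg_abs_le ⟪gradient f (x + t • v) - g, v⟫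
    have := abs_real_inner_le_norm (gradient f (x + t • v) - g) v
    nlinarith [norm_nonneg v]
  have hmono : MonotoneOn ψ (Set.Ici 0) :=
    monotoneOn_of_hasDerivWithinAt_nonneg (convex_Ici 0)
      (continuous_iff_continuousAt.2 fun t => (hψ t).continuousAt).continuousOn
      (fun t _ => (hψ t).hasDerivWithinAt)
      (fun t ht => hψ'_nonneg t (interior_subset ht))
  have h01 := hmono Set.self_mem_Ici (Set.mem_Ici.2 zero_le_one) zero_le_one
  simp only [ψ, zero_smul, one_smul, add_zero, zero_mul, one_mul, sub_zero] at h01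
  linarith

end Descent

lemma add_mul_norm_gradient_sub_le_of_normalized_step {E : Type*} [NormedAddCommGroup E]
    [InnerProductSpace ℝ E] [CompleteSpace E] {f : E → ℝ} {L α : ℝ} (hf : Differentiable ℝ f)
    (hlip : ∀ x y, ‖gradient f x - gradient f y‖ ≤ L * ‖x - y‖) (hL : 0 ≤ L) (hα : 0 ≤ α)
    (x d : E) :
    f x + α * (‖gradient f x‖ - 2 * ‖d - gradient f x‖) - L * α ^ 2 / 2 ≤
      f (x + α • (‖d‖⁻¹ • d)) := by
  have hdescent := add_inner_gradient_sub_le_of_gradient_lipschitz hf hlip x (α • (‖d‖⁻¹ • d))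
  have hinner : α * (‖gradient f x‖ - 2 * ‖d - gradient f x‖) ≤ ⟪gradient f x, α • (‖d‖⁻¹ • d)⟫ := by
    rw [real_inner_smul_right]
    exact mul_le_mul_of_nonneg_left (norm_sub_two_mul_norm_sub_le_inner_inv_norm_smul _ d) hα
  have hstep : ‖α • (‖d‖⁻¹ • d)‖ ^ 2 ≤ α ^ 2 := by
    rw [norm_smul, Real.norm_of_nonneg hα, mul_pow]
    exact mul_le_of_le_one_right (sq_nonneg α)
      (pow_le_one₀ (norm_nonneg _) (norm_inv_norm_smul_le_one d))
  have hquad := mul_le_mul_of_nonneg_left hstep hL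
  linarith

theorem normalized_step_gradient_domination_contraction_general
    {dim : ℕ}
    (J : EuclideanSpace ℝ (Fin dim) → ℝ) (Lg mu ε' : ℝ)
    (hLg : 0 < Lg)
    (hdiff : Differentiable ℝ J)
    (hlip : ∀ x y, ‖gradient J x - gradient J y‖ ≤ Lg * ‖x - y‖)
    (hdom : ∀ θ, Real.sqrt (2 * mu) * (sSup (Set.range J) - J θ) ≤ ε' + ‖gradient J θ‖)
    (α : ℝ) (hα : 0 < α) (θ dvec θ' : EuclideanSpace ℝ (Fin dim))
    (hθ' : θ' = θ + α • (‖dvec‖⁻¹ • dvec)) :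
    sSup (Set.range J) - J θ' ≤
      (1 - α * Real.sqrt (2 * mu)) * (sSup (Set.range J) - J θ)
        + α * ε' + 2 * α * ‖dvec - gradient J θ‖ + Lg * α ^ 2 / 2 := by
  have hstep := add_mul_norm_gradient_sub_le_of_normalized_step hdiff hlip hLg.le hα.le θ dvec
  have hdomα := mul_le_mul_of_nonneg_left (hdom θ) hα.le
  rw [hθ']
  linarith

/-- One-step contraction under relaxed weak gradient domination:
`J* − J(θ') ≤ (1 − α√(2μ))(J* − J(θ)) + αε' + 2α‖d − ∇J(θ)‖ + L_g α²/2`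
for the normalized step `θ' = θ + α d/‖d‖`. -/
theorem normalized_step_gradient_domination_contraction
    {dim : ℕ} (hdim : 0 < dim)
    (J : EuclideanSpace ℝ (Fin dim) → ℝ) (Lg mu ε' : ℝ)
    (hLg : 0 < Lg) (hmu : 0 < mu) (hε' : 0 ≤ ε')
    (hdiff : Differentiable ℝ J)
    (hlip : ∀ x y, ‖gradient J x - gradient J y‖ ≤ Lg * ‖x - y‖)
    (hbdd : BddAbove (Set.range J))
    (hdom : ∀ θ, Real.sqrt (2 * mu) * (sSup (Set.range J) - J θ) ≤ ε' + ‖gradient J θ‖)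
    (α : ℝ) (hα : 0 < α) (θ dvec θ' : EuclideanSpace ℝ (Fin dim))
    (hθ' : θ' = θ + α • (‖dvec‖⁻¹ • dvec)) :
    sSup (Set.range J) - J θ' ≤
      (1 - α * Real.sqrt (2 * mu)) * (sSup (Set.range J) - J θ)
        + α * ε' + 2 * α * ‖dvec - gradient J θ‖ + Lg * α ^ 2 / 2 :=
  normalized_step_gradient_domination_contraction_general J Lg mu ε' hLg hdiff hlip hdom α hα θ dvec
    θ' hθ'
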